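/- arXiv:2511.07235 — 2 statements merged into one kernel-verified Lean document; each statement's English description precedes it below -/
import Mathlib

section
/- Define ψ : ℝ → ℝ by ψ(a) = 1 for |a| < 1, ψ(a) = 2 - |a| for 1 ≤ |a| ≤ 2, and ψ(a) = 0 for |a| > 2. Let N ≥ 2, r > 0, and for grid points c_k ∈ {-r, -r + 2r/(N-1), ..., r}^d define φ_k(x) = Π_{j=1}^d ψ(3(N-1)(x_j - c_{k,j})/(2r)). Then for every x ∈ [-r,r]^d, Σ_k φ_k(x) = 1, each φ_k satisfies 0 ≤ φ_k ≤ 1, and the support of φ_k is contained in {x : ‖x - c_k‖_∞ ≤ 4r/(3(N-1))}. -/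
open Real

noncomputable def trapBump (a : ℝ) : ℝ := min (max (2 - |a|) 0) 1

lemma trapBump_nonneg (a : ℝ) : 0 ≤ trapBump a := le_min (le_max_right _ _) one_pos.le

lemma trapBump_le_one (a : ℝ) : trapBump a ≤ 1 := min_le_right _ _

lemma trapBump_eq_zero {a : ℝ} (h : 2 ≤ |a|) : trapBump a = 0 := by
  unfold trapBump
  rw [max_eq_right (by linarith), min_eq_left zero_le_one]

lemma two_term {s : ℝ} (h0 : 0 ≤ s) (h3 : s ≤ 3) :
    trapBump (s - 3) + trapBump s = 1 := by
  unfold trapBump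
  rw [abs_of_nonpos (by linarith), abs_of_nonneg h0]
  simp only [min_def, max_def]
  split_ifs <;> linarith

lemma key (n : ℕ) : ∀ s : ℝ, 0 ≤ s → s ≤ 3 * n →
    ∑ i ∈ Finset.range (n + 1), trapBump (s - 3 * i) = 1 := by
  induction n with
  | zero =>
    intro s h0 h1
    have hs : s = 0 := le_antisymm (by simpa using h1) h0
    simp [hs, trapBump]
  | succ n ih =>
    intro s h0 h1
    push_cast at h1
    rcases le_total 3 s with h3 | h3
    · rw [Finset.sum_range_succ']
      have hz : trapBump (s - 3 * ((0:ℕ):ℝ)) = 0 :=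
        trapBump_eq_zero (by rw [Nat.cast_zero, mul_zero, sub_zero, abs_of_nonneg h0]; linarith)
      rw [hz, add_zero]
      have he : ∀ i : ℕ, s - 3 * ((i + 1 : ℕ) : ℝ) = (s - 3) - 3 * i := by
        intro i; push_cast; ring
      simp only [he]
      exact ih (s - 3) (by linarith) (by linarith)
    · rw [Finset.sum_range_succ', Finset.sum_range_succ']
      have hz : ∀ i ∈ Finset.range n, trapBump (s - 3 * (((i + 1 : ℕ) + 1 : ℕ) : ℝ)) = 0 := by
        intro i _
        apply trapBump_eq_zero
        have hi : (0:ℝ) ≤ (i:ℝ) := Nat.cast_nonneg i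
        rw [abs_of_nonpos (by push_cast; linarith)]
        push_cast; linarith
      rw [Finset.sum_eq_zero hz, zero_add]
      have : s - 3 * (((0:ℕ) + 1 : ℕ) : ℝ) = s - 3 := by push_cast; ring
      rw [this, Nat.cast_zero, mul_zero, sub_zero]
      exact two_term h0 h3

lemma oneD {N : ℕ} (hN : 2 ≤ N) {r t : ℝ} (hr : 0 < r) (ht : |t| ≤ r) :
    ∑ i : Fin N, trapBump (3 * ((N:ℝ) - 1) * (t - (-r + 2 * r * (i:ℝ) / ((N:ℝ) - 1))) / (2 * r)) = 1 := by
  obtain ⟨m, rfl⟩ : ∃ m, N = m + 1 := ⟨N - 1, by omega⟩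
  have hm : 1 ≤ m := by omega
  have hm1 : (1:ℝ) ≤ (m:ℝ) := by exact_mod_cast hm
  have hcast : ((m + 1 : ℕ) : ℝ) - 1 = (m:ℝ) := by push_cast; ring
  rw [abs_le] at ht
  set s := 3 * (m:ℝ) * (t + r) / (2 * r) with hs
  have harg : ∀ i : ℕ, 3 * (((m+1:ℕ):ℝ) - 1) * (t - (-r + 2 * r * (i:ℝ) / (((m+1:ℕ):ℝ) - 1))) / (2 * r)
      = s - 3 * i := by
    intro i
    rw [hcast, hs]
    field_simp
    ring
  rw [Fin.sum_univ_eq_sum_range (fun i : ℕ => trapBump (3 * (((m+1:ℕ):ℝ) - 1) * (t - (-r + 2 * r * (i:ℝ) / (((m+1:ℕ):ℝ) - 1))) / (2 * r)))]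
  simp only [harg]
  apply key m s
  · apply div_nonneg _ (by linarith)
    nlinarith
  · rw [hs, div_le_iff₀ (by linarith)]
    nlinarith

/-- The product bump functions `φ_k` built from `ψ` over a uniform grid on `[-r,r]^d`
form a partition of unity, take values in `[0,1]`, and are supported in sup-norm balls
of radius `4r/(3(N-1))` around the grid points. -/
theorem stmt2 {d N : ℕ} (hN : 2 ≤ N) (r : ℝ) (hr : 0 < r)
    (c : (Fin d → Fin N) → EuclideanSpace ℝ (Fin d))
    (hc : ∀ k j, c k j = -r + 2 * r * (k j : ℝ) / (N - 1))
    (φ : (Fin d → Fin N) → EuclideanSpace ℝ (Fin d) → ℝ)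
    (hφ : ∀ k x, φ k x = ∏ j : Fin d, trapBump (3 * (N - 1) * (x j - c k j) / (2 * r))) :
    (∀ x : EuclideanSpace ℝ (Fin d), (∀ j, |x j| ≤ r) →
        ∑ k : Fin d → Fin N, φ k x = 1) ∧
    (∀ k x, 0 ≤ φ k x ∧ φ k x ≤ 1) ∧
    (∀ k x, φ k x ≠ 0 → ∀ j : Fin d, |x j - c k j| ≤ 4 * r / (3 * (N - 1))) := by
  have hN1 : (1:ℝ) ≤ (N:ℝ) - 1 := by
    have : (2:ℝ) ≤ (N:ℝ) := by exact_mod_cast hN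
    linarith
  refine ⟨?_, ?_, ?_⟩
  · intro x hx
    have h1 : ∑ k : Fin d → Fin N, φ k x
        = ∏ j : Fin d, ∑ i : Fin N,
            trapBump (3 * ((N:ℝ) - 1) * (x j - (-r + 2 * r * (i:ℝ) / ((N:ℝ) - 1))) / (2 * r)) := by
      rw [Finset.prod_univ_sum, Fintype.piFinset_univ]
      exact Finset.sum_congr rfl fun k _ => by
        rw [hφ k x]
        exact Finset.prod_congr rfl fun j _ => by rw [hc]
    rw [h1]
    exact Finset.prod_eq_one fun j _ => oneD hN hr (hx j)
  · intro k x
    rw [hφ]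
    exact ⟨Finset.prod_nonneg fun j _ => trapBump_nonneg _,
      Finset.prod_le_one (fun j _ => trapBump_nonneg _) (fun j _ => trapBump_le_one _)⟩
  · intro k x h j
    rw [hφ] at h
    have hne : trapBump (3 * ((N:ℝ) - 1) * (x j - c k j) / (2 * r)) ≠ 0 :=
      fun h0 => h (Finset.prod_eq_zero (Finset.mem_univ j) h0)
    have habs : |3 * ((N:ℝ) - 1) * (x j - c k j) / (2 * r)| ≤ 2 := by
      by_contra hcon
      push_neg at hcon
      exact hne (trapBump_eq_zero hcon.le)
    rw [abs_div, abs_mul, abs_of_nonneg (by linarith : (0:ℝ) ≤ 3 * ((N:ℝ) - 1)),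
      abs_of_nonneg (by linarith : (0:ℝ) ≤ 2 * r), div_le_iff₀ (by linarith)] at habs
    rw [le_div_iff₀ (by linarith)]
    nlinarith [abs_nonneg (x j - c k j)]
end

section
/- Let h : [-r̃, r̃]^n → ℝ be bounded by β and satisfy |h(x)-h(y)| ≤ L(|x-y|² + |x-y|)^{1/2}. Suppose each bump function φ_k in a partition of unity on [-r̃,r̃]^n (subordinate to sup-norm cubes of radius 2r̃/(N-1) around a uniform grid {c_k}_{k=1}^{N^n}) is approximated by functions q̃_k with ‖φ_k - q̃_k‖_∞ ≤ n δ̃. Then sup_{x∈[-r̃,r̃]^n} |h(x) - Σ_k h(c_k) q̃_k(x)| ≤ L((2√n r̃/(N-1))² + 2√n r̃/(N-1))^{1/2} + N^n · n · β · δ̃. -/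
open Real

/-- Total approximation error for a bounded hybrid-continuous function: piecewise-constant
interpolation error plus accumulated bump-function approximation error. -/
theorem stmt14 {n N : ℕ} (hN : 2 ≤ N) (rt L β δt : ℝ)
    (hrt : 0 < rt) (hL : 0 < L) (hβ : 0 < β) (hδt : 0 < δt)
    (h : EuclideanSpace ℝ (Fin n) → ℝ)
    (hbd : ∀ x : EuclideanSpace ℝ (Fin n), (∀ j, |x j| ≤ rt) → |h x| ≤ β)
    (hh : ∀ x y : EuclideanSpace ℝ (Fin n), (∀ j, |x j| ≤ rt) → (∀ j, |y j| ≤ rt) →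
      |h x - h y| ≤ L * Real.sqrt (‖x - y‖ ^ 2 + ‖x - y‖))
    (c : Fin (N ^ n) → EuclideanSpace ℝ (Fin n))
    (hc : ∀ k j, |c k j| ≤ rt)
    (φ : Fin (N ^ n) → EuclideanSpace ℝ (Fin n) → ℝ)
    (hφ0 : ∀ k x, 0 ≤ φ k x)
    (hsupp : ∀ k x, φ k x ≠ 0 → ∀ j : Fin n, |x j - c k j| ≤ 2 * rt / (N - 1))
    (hsum : ∀ x : EuclideanSpace ℝ (Fin n), (∀ j, |x j| ≤ rt) → ∑ k, φ k x = 1)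
    (q : Fin (N ^ n) → EuclideanSpace ℝ (Fin n) → ℝ)
    (hq : ∀ k (x : EuclideanSpace ℝ (Fin n)), (∀ j, |x j| ≤ rt) →
      |φ k x - q k x| ≤ n * δt) :
    ∀ x : EuclideanSpace ℝ (Fin n), (∀ j, |x j| ≤ rt) →
      |h x - ∑ k, h (c k) * q k x| ≤
        L * Real.sqrt ((2 * Real.sqrt n * rt / (N - 1)) ^ 2 + 2 * Real.sqrt n * rt / (N - 1))
          + (N : ℝ) ^ n * n * β * δt := by
  intro x hx
  have hN1 : (0:ℝ) < (N:ℝ) - 1 := by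
    have : (2:ℝ) ≤ (N:ℝ) := by exact_mod_cast hN
    linarith
  set e : ℝ := 2 * rt / (N - 1) with he
  set d : ℝ := 2 * Real.sqrt n * rt / (N - 1) with hd
  have he0 : 0 ≤ e := by positivity
  have hd0 : 0 ≤ d := by positivity
  have hde : d = Real.sqrt n * e := by rw [hd, he]; ring
  -- decomposition
  have key : h x - ∑ k, h (c k) * q k x =
      (∑ k, φ k x * (h x - h (c k))) + ∑ k, h (c k) * (φ k x - q k x) := by
    have h1 := hsum x hx
    have h2 : ∀ k ∈ Finset.univ (α := Fin (N ^ n)),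
        φ k x * (h x - h (c k)) + h (c k) * (φ k x - q k x)
          = φ k x * h x - h (c k) * q k x := fun k _ => by ring
    rw [← Finset.sum_add_distrib, Finset.sum_congr rfl h2, Finset.sum_sub_distrib,
      ← Finset.sum_mul, h1, one_mul]
  rw [key]
  have hA : |∑ k, φ k x * (h x - h (c k))| ≤ L * Real.sqrt (d ^ 2 + d) := by
    calc |∑ k, φ k x * (h x - h (c k))| ≤ ∑ k, |φ k x * (h x - h (c k))| :=
          Finset.abs_sum_le_sum_abs _ _
      _ ≤ ∑ k : Fin (N ^ n), φ k x * (L * Real.sqrt (d ^ 2 + d)) := by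
          apply Finset.sum_le_sum
          intro k _
          rw [abs_mul, abs_of_nonneg (hφ0 k x)]
          by_cases hzero : φ k x = 0
          · simp [hzero]
          · apply mul_le_mul_of_nonneg_left _ (hφ0 k x)
            have hnorm : ‖x - c k‖ ≤ d := by
              have : ‖x - c k‖ = Real.sqrt (∑ j, ‖(x - c k) j‖ ^ 2) :=
                EuclideanSpace.norm_eq _
              rw [this, hde]
              have hsum2 : (∑ j, ‖(x - c k) j‖ ^ 2) ≤ n * e ^ 2 := by
                calc (∑ j, ‖(x - c k) j‖ ^ 2) ≤ ∑ _j : Fin n, e ^ 2 := by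
                      apply Finset.sum_le_sum
                      intro j _
                      have := hsupp k x hzero j
                      have hxj : (x - c k) j = x j - c k j := rfl
                      rw [hxj, Real.norm_eq_abs]
                      exact pow_le_pow_left₀ (abs_nonneg _) this 2
                  _ = n * e ^ 2 := by simp [Finset.sum_const, nsmul_eq_mul]
              calc Real.sqrt (∑ j, ‖(x - c k) j‖ ^ 2) ≤ Real.sqrt ((n : ℝ) * e ^ 2) :=
                    Real.sqrt_le_sqrt hsum2
                _ = Real.sqrt n * e := by
                    rw [Real.sqrt_mul (Nat.cast_nonneg n), Real.sqrt_sq he0]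
            calc |h x - h (c k)| ≤ L * Real.sqrt (‖x - c k‖ ^ 2 + ‖x - c k‖) :=
                  hh x (c k) hx (hc k)
              _ ≤ L * Real.sqrt (d ^ 2 + d) := by
                  apply mul_le_mul_of_nonneg_left _ hL.le
                  apply Real.sqrt_le_sqrt
                  have h0 : 0 ≤ ‖x - c k‖ := norm_nonneg _
                  nlinarith
      _ = L * Real.sqrt (d ^ 2 + d) := by
          rw [← Finset.sum_mul, hsum x hx, one_mul]
  have hB : |∑ k, h (c k) * (φ k x - q k x)| ≤ (N : ℝ) ^ n * n * β * δt := by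
    calc |∑ k, h (c k) * (φ k x - q k x)| ≤ ∑ k, |h (c k) * (φ k x - q k x)| :=
          Finset.abs_sum_le_sum_abs _ _
      _ ≤ ∑ _k : Fin (N ^ n), β * (n * δt) := by
          apply Finset.sum_le_sum
          intro k _
          rw [abs_mul]
          exact mul_le_mul (hbd (c k) (hc k)) (hq k x hx) (abs_nonneg _) hβ.le
      _ = (N : ℝ) ^ n * n * β * δt := by
          simp [Finset.sum_const]
          ring
  calc |(∑ k, φ k x * (h x - h (c k))) + ∑ k, h (c k) * (φ k x - q k x)|
      ≤ |∑ k, φ k x * (h x - h (c k))| + |∑ k, h (c k) * (φ k x - q k x)| := abs_add_le _ _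
    _ ≤ L * Real.sqrt (d ^ 2 + d) + (N : ℝ) ^ n * n * β * δt := add_le_add hA hB
end
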